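/- On S^2 minus the north pole (0,0,1), let Z = (x̃^1 + i x̃^2)/(1 - x̃^3) and let Ẏ^A = (ε^{CD}∇_C Z ∇_D Z̄)^{-1} ε^{AB}∇_B Z̄. Then for each integer m ≥ 0, the divergence of the extended conformal Killing field Y^A = Z^{m+1} Ẏ^A is ∇_A Y^A = Z^m (m - x̃^3), and it satisfies (Δ + 2)(∇_A Y^A) = 0 on S^2 \ {(0,0,1)}. -/

import Mathlib

open MeasureTheory Real
noncomputable section

/-- Points of the stereographic chart of the round unit sphere `S²`
(the chart covers `S²` minus the north pole). -/
abbrev Pt := Fin 2 → ℝ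

/-- Partial derivative `∂_a f`. -/
def pd (a : Fin 2) (f : Pt → ℝ) (x : Pt) : ℝ := fderiv ℝ f x (Pi.single a 1)

/-- The round (unit sphere) metric `σ_{AB}` in stereographic coordinates. -/
def rnd (x : Pt) (a b : Fin 2) : ℝ :=
  (4 / (1 + x 0 ^ 2 + x 1 ^ 2) ^ 2) * (if a = b then 1 else 0)

/-- The inverse round metric `σ^{AB}`. -/
def rndInv (x : Pt) (a b : Fin 2) : ℝ :=
  ((1 + x 0 ^ 2 + x 1 ^ 2) ^ 2 / 4) * (if a = b then 1 else 0)

/-- The area form `ε_{AB}` of the round metric. -/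
def rndE (x : Pt) (a b : Fin 2) : ℝ :=
  (4 / (1 + x 0 ^ 2 + x 1 ^ 2) ^ 2) *
    (if a = 0 ∧ b = 1 then 1 else if a = 1 ∧ b = 0 then -1 else 0)

/-- The area form with raised indices `ε^{AB}`. -/
def rndEUp (x : Pt) (a b : Fin 2) : ℝ :=
  ∑ c, ∑ d, rndInv x a c * rndInv x b d * rndE x c d

/-- Christoffel symbols `Γ^c_{ab}` of the round metric. -/
def Gam (c a b : Fin 2) (x : Pt) : ℝ :=
  (1/2) * ∑ d, rndInv x c d *
    (pd a (fun y => rnd y d b) x + pd b (fun y => rnd y d a) x - pd d (fun y => rnd y a b) x)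

/-- Covariant derivative `∇_a Y^b` of a vector field. -/
def cdVec (Y : Pt → Fin 2 → ℝ) (x : Pt) (a b : Fin 2) : ℝ :=
  pd a (fun y => Y y b) x + ∑ c, Gam b a c x * Y x c

/-- Covariant derivative `∇_a ω_b` of a covector field. -/
def cdCov (ω : Pt → Fin 2 → ℝ) (x : Pt) (a b : Fin 2) : ℝ :=
  pd a (fun y => ω y b) x - ∑ c, Gam c a b x * ω x c

/-- Covariant derivative `∇_a T_{bc}` of a (0,2)-tensor. -/
def cdT2 (T : Pt → Fin 2 → Fin 2 → ℝ) (x : Pt) (a b c : Fin 2) : ℝ :=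
  pd a (fun y => T y b c) x - ∑ d, Gam d a b x * T x d c - ∑ d, Gam d a c x * T x b d

/-- Covariant derivative `∇_a T_b{}^c` of a (1,1)-tensor (lower, upper). -/
def cdMix (T : Pt → Fin 2 → Fin 2 → ℝ) (x : Pt) (a b c : Fin 2) : ℝ :=
  pd a (fun y => T y b c) x - ∑ d, Gam d a b x * T x d c + ∑ d, Gam c a d x * T x b d

/-- Covariant Hessian `∇_a ∇_b f`. -/
def hess (f : Pt → ℝ) (x : Pt) (a b : Fin 2) : ℝ := cdCov (fun y c => pd c f y) x a b

/-- Laplace–Beltrami operator `Δf = σ^{ab} ∇_a∇_b f` of the round metric. -/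
def lap (f : Pt → ℝ) (x : Pt) : ℝ := ∑ a, ∑ b, rndInv x a b * hess f x a b

/-- Covariant divergence `∇_A Y^A` of a vector field. -/
def divg (Y : Pt → Fin 2 → ℝ) (x : Pt) : ℝ := ∑ a, cdVec Y x a a

/-- The area density `√(det σ)` of the round metric in stereographic coordinates. -/
def aDen (x : Pt) : ℝ := 4 / (1 + x 0 ^ 2 + x 1 ^ 2) ^ 2

/-- Smoothness of a vector field. -/
def SmoothVec (Y : Pt → Fin 2 → ℝ) : Prop := ∀ b, ContDiff ℝ (⊤ : ℕ∞) (fun x => Y x b)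

/-- The conformal Killing equation `∇^A Y^B + ∇^B Y^A = (∇_C Y^C) σ^{AB}` on a set `U`. -/
def ConformalKilling (Y : Pt → Fin 2 → ℝ) (U : Set Pt) : Prop :=
  ∀ x ∈ U, ∀ A B : Fin 2,
    (∑ c, rndInv x A c * cdVec Y x c B) + (∑ c, rndInv x B c * cdVec Y x c A)
      = divg Y x * rndInv x A B

/-- The curl `ε_{AB} ∇^A Y^B` of a vector field. -/
def curl (Y : Pt → Fin 2 → ℝ) (x : Pt) : ℝ :=
  ∑ a, ∑ b, ∑ c, rndE x a b * rndInv x a c * cdVec Y x c b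

/-- Partial derivative of a complex-valued function. -/
def pdC (a : Fin 2) (f : Pt → ℂ) (x : Pt) : ℂ := fderiv ℝ f x (Pi.single a 1)

/-- Covariant derivative `∇_a Y^b` of a complex vector field (round metric). -/
def cdVecC (Y : Pt → Fin 2 → ℂ) (x : Pt) (a b : Fin 2) : ℂ :=
  pdC a (fun y => Y y b) x + ∑ c, (Gam b a c x : ℂ) * Y x c

/-- Covariant divergence of a complex vector field. -/
def divgC (Y : Pt → Fin 2 → ℂ) (x : Pt) : ℂ := ∑ a, cdVecC Y x a a

/-- Covariant Hessian of a complex function (round metric). -/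
def hessC (f : Pt → ℂ) (x : Pt) (a b : Fin 2) : ℂ :=
  pdC a (fun y => pdC b f y) x - ∑ c, (Gam c a b x : ℂ) * pdC c f x

/-- Laplacian of a complex function (round metric). -/
def lapC (f : Pt → ℂ) (x : Pt) : ℂ := ∑ a, ∑ b, (rndInv x a b : ℂ) * hessC f x a b

/-- `Z = (x̃¹ + i x̃²)/(1 - x̃³)`: in the stereographic chart of `S² ∖ {(0,0,1)}`
this is the complex coordinate. -/
def Zst (x : Pt) : ℂ := (x 0 : ℂ) + (x 1 : ℂ) * Complex.I

/-- The Cartesian coordinate `x̃³` restricted to the sphere, in the chart. -/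
def X3 (x : Pt) : ℝ := (x 0 ^ 2 + x 1 ^ 2 - 1) / (x 0 ^ 2 + x 1 ^ 2 + 1)

/-- `Ẏ^A = (ε^{CD}∇_C Z ∇_D Z̄)⁻¹ ε^{AB} ∇_B Z̄`. -/
def Ydot (x : Pt) (A : Fin 2) : ℂ :=
  (∑ c, ∑ d, (rndEUp x c d : ℂ) * pdC c Zst x
      * pdC d (fun y => starRingEnd ℂ (Zst y)) x)⁻¹ *
  ∑ b, (rndEUp x A b : ℂ) * pdC b (fun y => starRingEnd ℂ (Zst y)) x


namespace aux

theorem pd_of {f : Pt → ℝ} {L : Pt →L[ℝ] ℝ} {x : Pt} (h : HasFDerivAt f L x) (a : Fin 2) :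
    pd a f x = L (Pi.single a 1) := by rw [pd, h.fderiv]

theorem pdC_of {f : Pt → ℂ} {L : Pt →L[ℝ] ℂ} {x : Pt} (h : HasFDerivAt f L x) (a : Fin 2) :
    pdC a f x = L (Pi.single a 1) := by rw [pdC, h.fderiv]

def prj (i : Fin 2) : Pt →L[ℝ] ℝ := ContinuousLinearMap.proj i

def cprj (i : Fin 2) : Pt →L[ℝ] ℂ := Complex.ofRealCLM.comp (prj i)

theorem hasD_coord (i : Fin 2) (x : Pt) :
    HasFDerivAt (fun y : Pt => y i) (prj i) x := (prj i).hasFDerivAt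

theorem hasD_ccoord (i : Fin 2) (x : Pt) :
    HasFDerivAt (fun y : Pt => ((y i : ℝ) : ℂ)) (cprj i) x := (cprj i).hasFDerivAt

theorem hasD_inv {f : Pt → ℂ} {L : Pt →L[ℝ] ℂ} {x : Pt} (h : HasFDerivAt f L x)
    (hf : f x ≠ 0) :
    HasFDerivAt (fun y => (f y)⁻¹) ((-((f x)^2)⁻¹) • L) x := by
  have h2 := (hasFDerivAt_inv' (𝕜 := ℝ) hf).comp x h
  convert h2 using 1
  · rfl
  · rfl
  · rfl
  · rfl
  · rfl
  ext v
  simp only [ContinuousLinearMap.coe_comp', Function.comp_apply,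
    ContinuousLinearMap.neg_apply, ContinuousLinearMap.mulLeftRight_apply,
    ContinuousLinearMap.smul_apply, smul_eq_mul, sq]
  field_simp

theorem hasD_npow {f : Pt → ℂ} {L : Pt →L[ℝ] ℂ} {x : Pt} (h : HasFDerivAt f L x) (n : ℕ) :
    HasFDerivAt (fun y => f y ^ n) (((n : ℂ) * f x ^ (n-1)) • L) x := by
  induction n with
  | zero =>
      rw [show (((0:ℕ):ℂ) * f x ^ (0-1)) • L = 0 by rw [Nat.cast_zero, zero_mul]; exact zero_smul ℂ L]
      simpa using hasFDerivAt_const (𝕜 := ℝ) (1:ℂ) x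
  | succ n ih =>
      have h2 : HasFDerivAt (fun y => f y ^ n * f y) _ x := ih.mul h
      convert h2 using 1
      · rfl
      · funext y; exact pow_succ (f y) n
      ext v
      match n with
      | 0 => simp
      | Nat.succ k =>
        simp only [ContinuousLinearMap.add_apply, ContinuousLinearMap.smul_apply, smul_eq_mul,
          Nat.add_sub_cancel, Nat.succ_sub_one]
        push_cast
        ring_nf
        rw [pow_succ]
        ring

end aux

namespace aux
open Complex

def mk2 (α β : ℂ) : Pt →L[ℝ] ℂ := α • cprj 0 + β • cprj 1

theorem mk2_apply (α β : ℂ) (v : Pt) : mk2 α β v = α * (v 0 : ℂ) + β * (v 1 : ℂ) := by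
  simp [mk2, cprj, prj]

theorem mk2_single (α β : ℂ) (a : Fin 2) :
    mk2 α β (Pi.single a 1) = if a = 0 then α else β := by
  fin_cases a <;> simp [mk2_apply, Pi.single_apply]

@[simp] theorem mk2_smul (c α β : ℂ) : c • mk2 α β = mk2 (c*α) (c*β) := by
  ext v; simp [mk2_apply]; ring

@[simp] theorem mk2_add (α β γ δ : ℂ) : mk2 α β + mk2 γ δ = mk2 (α+γ) (β+δ) := by
  ext v; simp [mk2_apply]; ring

@[simp] theorem cprj_eq_mk2_0 : cprj 0 = mk2 1 0 := by ext v; simp [mk2_apply, cprj, prj]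
@[simp] theorem cprj_eq_mk2_1 : cprj 1 = mk2 0 1 := by ext v; simp [mk2_apply, cprj, prj]
@[simp] theorem zero_eq_mk2 : (0 : Pt →L[ℝ] ℂ) = mk2 0 0 := by ext v; simp [mk2_apply]

theorem hasD_Zst (x : Pt) : HasFDerivAt Zst (mk2 1 Complex.I) x := by
  have h : HasFDerivAt (fun y : Pt => ((y 0 : ℝ) : ℂ) + ((y 1 : ℝ) : ℂ) * Complex.I) _ x :=
    (hasD_ccoord 0 x).add ((hasD_ccoord 1 x).mul (hasFDerivAt_const (𝕜 := ℝ) Complex.I x))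
  convert h using 1
  · rfl
  · rfl
  ext v; simp [mk2_apply, cprj, prj]; try ring

theorem hasD_Zbar (x : Pt) :
    HasFDerivAt (fun y => starRingEnd ℂ (Zst y)) (mk2 1 (-Complex.I)) x := by
  have hfun : (fun y => starRingEnd ℂ (Zst y))
      = fun y : Pt => ((y 0 : ℝ) : ℂ) + ((y 1 : ℝ) : ℂ) * (-Complex.I) := by
    funext y; simp [Zst]; try ring
  rw [hfun]
  have h : HasFDerivAt (fun y : Pt => ((y 0 : ℝ) : ℂ) + ((y 1 : ℝ) : ℂ) * (-Complex.I)) _ x :=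
    (hasD_ccoord 0 x).add ((hasD_ccoord 1 x).mul (hasFDerivAt_const (𝕜 := ℝ) (-Complex.I) x))
  convert h using 1
  · rfl
  ext v; simp [mk2_apply, cprj, prj]; try ring

theorem hasD_src (x : Pt) :
    HasFDerivAt (fun y : Pt => ((1 + y 0 ^ 2 + y 1 ^ 2 : ℝ) : ℂ))
      (mk2 (2 * (x 0 : ℂ)) (2 * (x 1 : ℂ))) x := by
  have hfun : (fun y : Pt => ((1 + y 0 ^ 2 + y 1 ^ 2 : ℝ) : ℂ))
      = fun y : Pt => (1 : ℂ) + ((y 0 : ℝ) : ℂ) ^ 2 + ((y 1 : ℝ) : ℂ) ^ 2 := by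
    funext y; push_cast; ring
  rw [hfun]
  have h : HasFDerivAt (fun y : Pt => (1 : ℂ) + ((y 0 : ℝ) : ℂ) ^ 2 + ((y 1 : ℝ) : ℂ) ^ 2) _ x :=
    ((hasFDerivAt_const (𝕜 := ℝ) (1:ℂ) x).add (hasD_npow (hasD_ccoord 0 x) 2)).add
    (hasD_npow (hasD_ccoord 1 x) 2)
  convert h using 1
  · rfl
  ext v; simp [mk2_apply, cprj, prj]; try ring

end aux

namespace aux2
open aux

def eC (a : Fin 2) : ℂ := if a = 0 then 1 else Complex.I

theorem pdC_Zst (a : Fin 2) (x : Pt) : pdC a Zst x = eC a := by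
  rw [pdC_of (hasD_Zst x), mk2_single]; rfl

theorem pdC_Zbar (a : Fin 2) (x : Pt) :
    pdC a (fun y => starRingEnd ℂ (Zst y)) x = starRingEnd ℂ (eC a) := by
  rw [pdC_of (hasD_Zbar x), mk2_single]
  fin_cases a <;> simp [eC]

theorem sr_ne (x : Pt) : (1 + x 0 ^ 2 + x 1 ^ 2) ≠ 0 := by positivity

theorem src_ne (x : Pt) : ((1 + x 0 ^ 2 + x 1 ^ 2 : ℝ) : ℂ) ≠ 0 := by
  exact_mod_cast Complex.ofReal_ne_zero.mpr (sr_ne x)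

theorem rndEUp_val (x : Pt) (a b : Fin 2) :
    rndEUp x a b = ((1 + x 0 ^ 2 + x 1 ^ 2) ^ 2 / 4) *
      (if a = 0 ∧ b = 1 then 1 else if a = 1 ∧ b = 0 then -1 else 0) := by
  have hs := sr_ne x
  fin_cases a <;> fin_cases b <;>
    simp [rndEUp, rndInv, rndE, Fin.sum_univ_two] <;> field_simp <;> ring

theorem Ydot_eq (x : Pt) (A : Fin 2) :
    Ydot x A = if A = 0 then (1/2 : ℂ) else -(Complex.I/2) := by
  have hs := src_ne x
  have hI := Complex.I_ne_zero
  rw [Ydot]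
  have hD : (∑ c, ∑ d, (rndEUp x c d : ℂ) * pdC c Zst x
      * pdC d (fun y => starRingEnd ℂ (Zst y)) x)
      = -(Complex.I) * (((1 + x 0 ^ 2 + x 1 ^ 2 : ℝ) : ℂ) ^ 2 / 2) := by
    simp only [Fin.sum_univ_two, pdC_Zst, pdC_Zbar, rndEUp_val, eC]
    push_cast
    simp
    ring
  have ha : -(Complex.I) * (((1 + x 0 ^ 2 + x 1 ^ 2 : ℝ) : ℂ) ^ 2 / 2) ≠ 0 :=
    mul_ne_zero (neg_ne_zero.mpr hI) (div_ne_zero (pow_ne_zero 2 hs) two_ne_zero)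
  rw [hD, inv_mul_eq_iff_eq_mul₀ ha]
  simp only [Fin.sum_univ_two, pdC_Zbar, rndEUp_val, eC]
  fin_cases A <;> simp <;> push_cast <;>
    [skip; linear_combination (-(((1:ℂ) + (x 0:ℂ)^2 + (x 1:ℂ)^2)^2)/4) * Complex.I_sq]
  ring
def rmk2 (α β : ℝ) : Pt →L[ℝ] ℝ := α • prj 0 + β • prj 1

theorem rmk2_apply (α β : ℝ) (v : Pt) : rmk2 α β v = α * v 0 + β * v 1 := by
  simp [rmk2, prj]

theorem rmk2_single (α β : ℝ) (a : Fin 2) :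
    rmk2 α β (Pi.single a 1) = if a = 0 then α else β := by
  fin_cases a <;> simp [rmk2_apply, Pi.single_apply]

@[simp] theorem rmk2_smul (c α β : ℝ) : c • rmk2 α β = rmk2 (c*α) (c*β) := by
  ext v; simp [rmk2_apply]; ring

@[simp] theorem rmk2_add (α β γ δ : ℝ) : rmk2 α β + rmk2 γ δ = rmk2 (α+γ) (β+δ) := by
  ext v; simp [rmk2_apply]; ring

@[simp] theorem prj_eq_rmk2_0 : prj 0 = rmk2 1 0 := by ext v; simp [rmk2_apply, prj]
@[simp] theorem prj_eq_rmk2_1 : prj 1 = rmk2 0 1 := by ext v; simp [rmk2_apply, prj]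
@[simp] theorem zero_eq_rmk2 : (0 : Pt →L[ℝ] ℝ) = rmk2 0 0 := by ext v; simp [rmk2_apply]

theorem hasD_rinv {f : Pt → ℝ} {L : Pt →L[ℝ] ℝ} {x : Pt} (h : HasFDerivAt f L x)
    (hf : f x ≠ 0) :
    HasFDerivAt (fun y => (f y)⁻¹) ((-((f x)^2)⁻¹) • L) x := by
  have h2 := (hasFDerivAt_inv' (𝕜 := ℝ) hf).comp x h
  convert h2 using 1
  · rfl
  · rfl
  · rfl
  · rfl
  · rfl
  · rfl
  ext v
  simp only [ContinuousLinearMap.coe_comp', Function.comp_apply,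
    ContinuousLinearMap.neg_apply, ContinuousLinearMap.mulLeftRight_apply,
    ContinuousLinearMap.smul_apply, smul_eq_mul, sq]
  field_simp

theorem hasD_sr (x : Pt) :
    HasFDerivAt (fun y : Pt => 1 + y 0 ^ 2 + y 1 ^ 2) (rmk2 (2 * x 0) (2 * x 1)) x := by
  have h : HasFDerivAt (fun y : Pt => 1 + y 0 * y 0 + y 1 * y 1) _ x := ((hasFDerivAt_const (𝕜 := ℝ) (1:ℝ) x).add
      ((hasD_coord 0 x).mul (hasD_coord 0 x))).add ((hasD_coord 1 x).mul (hasD_coord 1 x))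
  have hfun : (fun y : Pt => 1 + y 0 ^ 2 + y 1 ^ 2) = fun y : Pt => 1 + y 0 * y 0 + y 1 * y 1 := by
    funext y; ring
  rw [hfun]
  convert h using 1
  · rfl
  · rfl
  ext v; simp [rmk2_apply, prj]; ring

theorem pd_conf (x : Pt) (a : Fin 2) :
    pd a (fun y : Pt => 4 / (1 + y 0 ^ 2 + y 1 ^ 2) ^ 2) x
      = -16 * x a / (1 + x 0 ^ 2 + x 1 ^ 2) ^ 3 := by
  have hs := sr_ne x
  have hfun : (fun y : Pt => 4 / (1 + y 0 ^ 2 + y 1 ^ 2) ^ 2)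
      = fun y : Pt => 4 * (((1 + y 0 ^ 2 + y 1 ^ 2) * (1 + y 0 ^ 2 + y 1 ^ 2))⁻¹) := by
    funext y; rw [sq]; ring
  rw [hfun]
  have hprod : HasFDerivAt (fun y : Pt => (1 + y 0 ^ 2 + y 1 ^ 2) * (1 + y 0 ^ 2 + y 1 ^ 2)) _ x :=
    (hasD_sr x).mul (hasD_sr x)
  have hinv := hasD_rinv hprod (by positivity)
  have h4 := hinv.const_mul (4:ℝ)
  rw [pd_of h4]
  simp only [rmk2_smul, rmk2_add, rmk2_single, ContinuousLinearMap.smul_apply]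
  fin_cases a <;> simp <;> field_simp <;> ring

theorem pd_rnd (x : Pt) (a d b : Fin 2) :
    pd a (fun y => rnd y d b) x
      = (if d = b then 1 else 0) * (-16 * x a / (1 + x 0 ^ 2 + x 1 ^ 2) ^ 3) := by
  by_cases hdb : d = b
  · have hfun : (fun y => rnd y d b) = fun y : Pt => 4 / (1 + y 0 ^ 2 + y 1 ^ 2) ^ 2 := by
      funext y; simp [rnd, hdb]
    rw [hfun, pd_conf, if_pos hdb, one_mul]
  · have hfun : (fun y => rnd y d b) = fun _ : Pt => (0:ℝ) := by
      funext y; simp [rnd, hdb]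
    rw [hfun, if_neg hdb, zero_mul]
    simp [pd, fderiv_const, rmk2_apply]

theorem Gam_eq (c a b : Fin 2) (x : Pt) :
    Gam c a b x = (-2 / (1 + x 0 ^ 2 + x 1 ^ 2)) *
      (x a * (if c = b then 1 else 0) + x b * (if c = a then 1 else 0)
        - x c * (if a = b then 1 else 0)) := by
  have hs := sr_ne x
  rw [Gam]
  simp only [Fin.sum_univ_two, rndInv, pd_rnd]
  fin_cases c <;> fin_cases a <;> fin_cases b <;> simp <;> field_simp <;> ring

theorem pdC_pow_const (n : ℕ) (c : ℂ) (a : Fin 2) (x : Pt) :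
    pdC a (fun y => Zst y ^ n * c) x = (n:ℂ) * Zst x ^ (n-1) * eC a * c := by
  have h : HasFDerivAt (fun y => Zst y ^ n * c) _ x :=
    (hasD_npow (hasD_Zst x) n).mul (hasFDerivAt_const (𝕜 := ℝ) c x)
  rw [pdC_of h]
  simp only [zero_eq_mk2, mk2_smul, mk2_add, mk2_single]
  fin_cases a <;> simp [eC] <;> ring

def Hf (m : ℕ) (y : Pt) : ℂ :=
  ((m:ℂ) - 1) * Zst y ^ m + 2 * Zst y ^ m * (((1 + y 0 ^ 2 + y 1 ^ 2 : ℝ)) : ℂ)⁻¹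

theorem hzz (x : Pt) :
    Zst x * ((x 0 : ℂ) - (x 1 : ℂ) * Complex.I) = (x 0 : ℂ)^2 + (x 1 : ℂ)^2 := by
  simp only [Zst]
  linear_combination (-(x 1:ℂ)^2) * Complex.I_sq

theorem div_eq (m : ℕ) (x : Pt) :
    divgC (fun y A => Zst y ^ (m + 1) * Ydot y A) x = Hf m x := by
  have hs := sr_ne x
  have hsc := src_ne x
  have hY : (fun y A => Zst y ^ (m + 1) * Ydot y A)
      = fun y A => Zst y ^ (m + 1) * (if A = 0 then (1/2:ℂ) else -(Complex.I/2)) := by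
    funext y A; rw [Ydot_eq]
  rw [hY]
  simp only [divgC, cdVecC, Fin.sum_univ_two, pdC_pow_const, Gam_eq, Hf]
  norm_num [eC]
  rw [pow_succ (Zst x) m]
  have hsc' : ((1:ℂ) + (x 0:ℂ)^2 + (x 1:ℂ)^2) ≠ 0 := by push_cast at hsc; exact hsc
  have hss : ((1:ℂ) + (x 0:ℂ)^2 + (x 1:ℂ)^2) * ((1:ℂ) + (x 0:ℂ)^2 + (x 1:ℂ)^2)⁻¹ = 1 :=
    mul_inv_cancel₀ hsc'
  linear_combination (-2 * ((1+(x 0:ℂ)^2+(x 1:ℂ)^2)⁻¹) * Zst x ^ m) * hzz x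
    + (-(((m:ℂ)+1)/2) * Zst x ^ m) * Complex.I_sq + (-2 * Zst x ^ m) * hss

theorem Hf_eq (m : ℕ) (x : Pt) : Hf m x = Zst x ^ m * ((m : ℂ) - (X3 x : ℂ)) := by
  have hsc := src_ne x
  have hsc' : ((1:ℂ) + (x 0:ℂ)^2 + (x 1:ℂ)^2) ≠ 0 := by push_cast at hsc; exact hsc
  rw [Hf, X3]
  push_cast
  have hss : ((1:ℂ) + (x 0:ℂ)^2 + (x 1:ℂ)^2) * ((1:ℂ) + (x 0:ℂ)^2 + (x 1:ℂ)^2)⁻¹ = 1 :=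
    mul_inv_cancel₀ (by push_cast at hsc; exact hsc)
  linear_combination (Zst x ^ m) * hss

def ue (y : Pt) : ℂ := (((1 + y 0 ^ 2 + y 1 ^ 2 : ℝ)) : ℂ)⁻¹

theorem hasD_ue (x : Pt) :
    HasFDerivAt ue (mk2 (-2*(x 0:ℂ)*ue x^2) (-2*(x 1:ℂ)*ue x^2)) x := by
  have h := hasD_inv (hasD_src x) (src_ne x)
  have hfun : ue = fun y : Pt => (((1 + y 0 ^ 2 + y 1 ^ 2 : ℝ) : ℂ))⁻¹ := rfl
  rw [hfun]
  convert h using 1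
  simp only [mk2_smul]
  congr 1 <;> simp [ue, ← inv_pow] <;> ring

def Pf (m : ℕ) (b : Fin 2) (y : Pt) : ℂ :=
  ((m:ℂ) - 1) * (m:ℂ) * Zst y ^ (m-1) * eC b
  + 2 * (m:ℂ) * Zst y ^ (m-1) * ue y * eC b
  - 4 * Zst y ^ m * ue y ^ 2 * (y b : ℂ)

theorem pdC_Hf (m : ℕ) (b : Fin 2) (y : Pt) : pdC b (Hf m) y = Pf m b y := by
  have h1 := (hasD_npow (hasD_Zst y) m).const_mul ((m:ℂ)-1)
  have h2 := ((hasD_npow (hasD_Zst y) m).mul (hasD_ue y)).const_mul (2:ℂ)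
  have hfun : Hf m = fun z => ((m:ℂ)-1) * Zst z ^ m + 2 * (Zst z ^ m * ue z) := by
    funext z; rw [Hf]; rw [show ue z = (((1 + z 0 ^ 2 + z 1 ^ 2 : ℝ)) : ℂ)⁻¹ from rfl]; ring
  rw [hfun]
  erw [pdC_of (h1.add h2)]
  simp only [mk2_smul, mk2_add, mk2_single]
  fin_cases b <;> simp [Pf, eC] <;> ring

theorem pdC_Pf (m : ℕ) (a b : Fin 2) (x : Pt) :
    pdC a (Pf m b) x =
      ((m:ℂ)-1) * (m:ℂ) * ((m-1:ℕ):ℂ) * Zst x ^ (m-1-1) * eC a * eC b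
      + 2 * (m:ℂ) * (((m-1:ℕ):ℂ) * Zst x ^ (m-1-1) * ue x * eC a
          - 2 * Zst x ^ (m-1) * ue x ^ 2 * (x a : ℂ)) * eC b
      - 4 * ((m:ℂ) * Zst x ^ (m-1) * eC a * ue x ^ 2 * (x b : ℂ)
          - 4 * Zst x ^ m * ue x ^ 3 * (x a : ℂ) * (x b : ℂ)
          + Zst x ^ m * ue x ^ 2 * (if a = b then 1 else 0)) := by
  have h1 := (hasD_npow (hasD_Zst x) (m-1)).const_mul (((m:ℂ)-1) * (m:ℂ) * eC b)
  have h2 := ((hasD_npow (hasD_Zst x) (m-1)).mul (hasD_ue x)).const_mul (2 * (m:ℂ) * eC b)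
  have h3 := (((hasD_npow (hasD_Zst x) m).mul (hasD_npow (hasD_ue x) 2)).mul
      (hasD_ccoord b x)).const_mul (-4:ℂ)
  have hfun : Pf m b = fun y => (((m:ℂ)-1) * (m:ℂ) * eC b) * Zst y ^ (m-1)
      + (2 * (m:ℂ) * eC b) * (Zst y ^ (m-1) * ue y)
      + (-4:ℂ) * ((Zst y ^ m * ue y ^ 2) * (y b : ℂ)) := by
    funext z; rw [Pf]; ring
  rw [hfun]
  erw [pdC_of ((h1.add h2).add h3)]
  simp only [mk2_smul, mk2_add, mk2_single]
  fin_cases a <;> fin_cases b <;> simp [mk2_single, eC] <;> try ring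

set_option maxHeartbeats 2000000 in
theorem lap_plus (m : ℕ) (x : Pt) : lapC (Hf m) x + 2 * Hf m x = 0 := by
  have hs := sr_ne x
  have hP : ∀ b, (fun y => pdC b (Hf m) y) = Pf m b := fun b => funext (pdC_Hf m b)
  have hss : ((1:ℂ) + (x 0:ℂ)^2 + (x 1:ℂ)^2) * ((1:ℂ) + (x 0:ℂ)^2 + (x 1:ℂ)^2)⁻¹ = 1 :=
    mul_inv_cancel₀ (by exact_mod_cast src_ne x)
  have hz : Zst x = (x 0:ℂ) + (x 1:ℂ) * Complex.I := rfl
  simp only [lapC, hessC, Fin.sum_univ_two, hP]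
  simp only [pdC_Pf, pdC_Hf]
  simp only [Pf, Hf, ue, eC, Gam_eq, rndInv]
  norm_num
  simp only [← inv_pow]
  match m with
  | 0 =>
    norm_num
    try simp only [← inv_pow]
    linear_combination (2 - 2*(((1:ℂ) + (x 0:ℂ)^2 + (x 1:ℂ)^2)⁻¹) + 2*((x 1:ℂ))^2*(((1:ℂ) + (x 0:ℂ)^2 + (x 1:ℂ)^2)⁻¹) + 4*((x 1:ℂ))^2*((((1:ℂ) + (x 0:ℂ)^2 + (x 1:ℂ)^2)⁻¹))^2 + 4*((x 1:ℂ))^4*((((1:ℂ) + (x 0:ℂ)^2 + (x 1:ℂ)^2)⁻¹))^2 + 2*((x 0:ℂ))^2*(((1:ℂ) + (x 0:ℂ)^2 + (x 1:ℂ)^2)⁻¹) + 4*((x 0:ℂ))^2*((((1:ℂ) + (x 0:ℂ)^2 + (x 1:ℂ)^2)⁻¹))^2 + 8*((x 0:ℂ))^2*((x 1:ℂ))^2*((((1:ℂ) + (x 0:ℂ)^2 + (x 1:ℂ)^2)⁻¹))^2 + 4*((x 0:ℂ))^4*((((1:ℂ) + (x 0:ℂ)^2 + (x 1:ℂ)^2)⁻¹))^2)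 * hss
  | 1 =>
    norm_num
    try simp only [← inv_pow]
    linear_combination (-4*(x 1:ℂ)*Complex.I*(((1:ℂ) + (x 0:ℂ)^2 + (x 1:ℂ)^2)⁻¹) + 4*((x 1:ℂ))^3*Complex.I*((((1:ℂ) + (x 0:ℂ)^2 + (x 1:ℂ)^2)⁻¹))^2 + 4*((x 1:ℂ))^5*Complex.I*((((1:ℂ) + (x 0:ℂ)^2 + (x 1:ℂ)^2)⁻¹))^2 - 4*(x 0:ℂ)*(((1:ℂ) + (x 0:ℂ)^2 + (x 1:ℂ)^2)⁻¹) + 4*(x 0:ℂ)*((x 1:ℂ))^2*((((1:ℂ) + (x 0:ℂ)^2 + (x 1:ℂ)^2)⁻¹))^2 + 4*(x 0:ℂ)*((x 1:ℂ))^4*((((1:ℂ) + (x 0:ℂ)^2 + (x 1:ℂ)^2)⁻¹))^2 + 4*((x 0:ℂ))^2*(x 1:ℂ)*Complex.I*((((1:ℂ) + (x 0:ℂ)^2 + (x 1:ℂ)^2)⁻¹))^2 + 8*((x 0:ℂ))^2*((x 1:ℂ))^3*Complex.I*((((1:ℂ) + (x 0:ℂ)^2 + (x 1:ℂ)^2)⁻¹))^2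 + 4*((x 0:ℂ))^3*((((1:ℂ) + (x 0:ℂ)^2 + (x 1:ℂ)^2)⁻¹))^2 + 8*((x 0:ℂ))^3*((x 1:ℂ))^2*((((1:ℂ) + (x 0:ℂ)^2 + (x 1:ℂ)^2)⁻¹))^2 + 4*((x 0:ℂ))^4*(x 1:ℂ)*Complex.I*((((1:ℂ) + (x 0:ℂ)^2 + (x 1:ℂ)^2)⁻¹))^2 + 4*((x 0:ℂ))^5*((((1:ℂ) + (x 0:ℂ)^2 + (x 1:ℂ)^2)⁻¹))^2) * hss
      + (4*(((1:ℂ) + (x 0:ℂ)^2 + (x 1:ℂ)^2)⁻¹) - 2*((((1:ℂ) + (x 0:ℂ)^2 + (x 1:ℂ)^2)⁻¹))^2 - 4*((x 1:ℂ))^2*((((1:ℂ) + (x 0:ℂ)^2 + (x 1:ℂ)^2)⁻¹))^2 + 4*((x 1:ℂ))^2*((((1:ℂ) + (x 0:ℂ)^2 + (x 1:ℂ)^2)⁻¹))^3 - 2*((x 1:ℂ))^4*((((1:ℂ) + (x 0:ℂ)^2 + (x 1:ℂ)^2)⁻¹))^2 + 8*((x 1:ℂ))^4*((((1:ℂ)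 + (x 0:ℂ)^2 + (x 1:ℂ)^2)⁻¹))^3 + 4*((x 1:ℂ))^6*((((1:ℂ) + (x 0:ℂ)^2 + (x 1:ℂ)^2)⁻¹))^3 - 4*((x 0:ℂ))^2*((((1:ℂ) + (x 0:ℂ)^2 + (x 1:ℂ)^2)⁻¹))^2 + 4*((x 0:ℂ))^2*((((1:ℂ) + (x 0:ℂ)^2 + (x 1:ℂ)^2)⁻¹))^3 - 4*((x 0:ℂ))^2*((x 1:ℂ))^2*((((1:ℂ) + (x 0:ℂ)^2 + (x 1:ℂ)^2)⁻¹))^2 + 16*((x 0:ℂ))^2*((x 1:ℂ))^2*((((1:ℂ) + (x 0:ℂ)^2 + (x 1:ℂ)^2)⁻¹))^3 + 12*((x 0:ℂ))^2*((x 1:ℂ))^4*((((1:ℂ) + (x 0:ℂ)^2 + (x 1:ℂ)^2)⁻¹))^3 - 2*((x 0:ℂ))^4*((((1:ℂ) + (x 0:ℂ)^2 + (x 1:ℂ)^2)⁻¹))^2 + 8*((x 0:ℂ))^4*((((1:ℂ) + (x 0:ℂ)^2 + (x 1:ℂ)^2)⁻¹))^3 + 12*((x 0:ℂ))^4*((x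 1:ℂ))^2*((((1:ℂ) + (x 0:ℂ)^2 + (x 1:ℂ)^2)⁻¹))^3 + 4*((x 0:ℂ))^6*((((1:ℂ) + (x 0:ℂ)^2 + (x 1:ℂ)^2)⁻¹))^3) * hz
  | (k+2) =>
    simp only [Nat.add_sub_cancel, Nat.succ_sub_one, show k+2-1 = k+1 from rfl, show k+1-1 = k from rfl]
    rw [pow_succ (Zst x) (k+1), pow_succ (Zst x) k]
    push_cast
    try simp only [← inv_pow]
    linear_combination (2*((x 1:ℂ))^2*(Zst x ^ k) + 6*((x 1:ℂ))^2*(Zst x ^ k)*(((1:ℂ) + (x 0:ℂ)^2 + (x 1:ℂ)^2)⁻¹) + 2*((x 1:ℂ))^2*(Zst x ^ k)*((k:ℂ)) + 2*((x 1:ℂ))^2*(Zst x ^ k)*((k:ℂ))*(((1:ℂ) + (x 0:ℂ)^2 + (x 1:ℂ)^2)⁻¹) + 2*((x 1:ℂ))^4*(Zst x ^ k)*(((1:ℂ) + (x 0:ℂ)^2 + (x 1:ℂ)^2)⁻¹) - 4*((x 1:ℂ))^4*(Zst x ^ k)*((((1:ℂ) + (x 0:ℂ)^2 + (x 1:ℂ)^2)⁻¹))^2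 + 2*((x 1:ℂ))^4*(Zst x ^ k)*((k:ℂ))*(((1:ℂ) + (x 0:ℂ)^2 + (x 1:ℂ)^2)⁻¹) - 4*((x 1:ℂ))^6*(Zst x ^ k)*((((1:ℂ) + (x 0:ℂ)^2 + (x 1:ℂ)^2)⁻¹))^2 - 4*(x 0:ℂ)*(x 1:ℂ)*Complex.I*(Zst x ^ k) - 12*(x 0:ℂ)*(x 1:ℂ)*Complex.I*(Zst x ^ k)*(((1:ℂ) + (x 0:ℂ)^2 + (x 1:ℂ)^2)⁻¹) - 4*(x 0:ℂ)*(x 1:ℂ)*Complex.I*(Zst x ^ k)*((k:ℂ)) - 4*(x 0:ℂ)*(x 1:ℂ)*Complex.I*(Zst x ^ k)*((k:ℂ))*(((1:ℂ) + (x 0:ℂ)^2 + (x 1:ℂ)^2)⁻¹) - 4*(x 0:ℂ)*((x 1:ℂ))^3*Complex.I*(Zst x ^ k)*(((1:ℂ) + (x 0:ℂ)^2 + (x 1:ℂ)^2)⁻¹) + 8*(x 0:ℂ)*((x 1:ℂ))^3*Complex.I*(Zst x ^ k)*((((1:ℂ) + (x 0:ℂ)^2 + (x 1:ℂ)^2)⁻¹))^2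 - 4*(x 0:ℂ)*((x 1:ℂ))^3*Complex.I*(Zst x ^ k)*((k:ℂ))*(((1:ℂ) + (x 0:ℂ)^2 + (x 1:ℂ)^2)⁻¹) + 8*(x 0:ℂ)*((x 1:ℂ))^5*Complex.I*(Zst x ^ k)*((((1:ℂ) + (x 0:ℂ)^2 + (x 1:ℂ)^2)⁻¹))^2 - 2*((x 0:ℂ))^2*(Zst x ^ k) - 6*((x 0:ℂ))^2*(Zst x ^ k)*(((1:ℂ) + (x 0:ℂ)^2 + (x 1:ℂ)^2)⁻¹) - 2*((x 0:ℂ))^2*(Zst x ^ k)*((k:ℂ)) - 2*((x 0:ℂ))^2*(Zst x ^ k)*((k:ℂ))*(((1:ℂ) + (x 0:ℂ)^2 + (x 1:ℂ)^2)⁻¹) - 4*((x 0:ℂ))^2*((x 1:ℂ))^4*(Zst x ^ k)*((((1:ℂ) + (x 0:ℂ)^2 + (x 1:ℂ)^2)⁻¹))^2 - 4*((x 0:ℂ))^3*(x 1:ℂ)*Complex.I*(Zst x ^ k)*(((1:ℂ) + (x 0:ℂ)^2 + (x 1:ℂ)^2)⁻¹) + 8*((x 0:ℂ))^3*(x 1:ℂ)*Complex.I*(Zst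 x ^ k)*((((1:ℂ) + (x 0:ℂ)^2 + (x 1:ℂ)^2)⁻¹))^2 - 4*((x 0:ℂ))^3*(x 1:ℂ)*Complex.I*(Zst x ^ k)*((k:ℂ))*(((1:ℂ) + (x 0:ℂ)^2 + (x 1:ℂ)^2)⁻¹) + 16*((x 0:ℂ))^3*((x 1:ℂ))^3*Complex.I*(Zst x ^ k)*((((1:ℂ) + (x 0:ℂ)^2 + (x 1:ℂ)^2)⁻¹))^2 - 2*((x 0:ℂ))^4*(Zst x ^ k)*(((1:ℂ) + (x 0:ℂ)^2 + (x 1:ℂ)^2)⁻¹) + 4*((x 0:ℂ))^4*(Zst x ^ k)*((((1:ℂ) + (x 0:ℂ)^2 + (x 1:ℂ)^2)⁻¹))^2 - 2*((x 0:ℂ))^4*(Zst x ^ k)*((k:ℂ))*(((1:ℂ) + (x 0:ℂ)^2 + (x 1:ℂ)^2)⁻¹) + 4*((x 0:ℂ))^4*((x 1:ℂ))^2*(Zst x ^ k)*((((1:ℂ) + (x 0:ℂ)^2 + (x 1:ℂ)^2)⁻¹))^2 + 8*((x 0:ℂ))^5*(x 1:ℂ)*Complex.I*(Zst x ^ k)*((((1:ℂ)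 + (x 0:ℂ)^2 + (x 1:ℂ)^2)⁻¹))^2 + 4*((x 0:ℂ))^6*(Zst x ^ k)*((((1:ℂ) + (x 0:ℂ)^2 + (x 1:ℂ)^2)⁻¹))^2) * hss
      + ((1/2)*(Zst x ^ k) + (Zst x ^ k)*(((1:ℂ) + (x 0:ℂ)^2 + (x 1:ℂ)^2)⁻¹) + (5/4)*(Zst x ^ k)*((k:ℂ)) + (3/2)*(Zst x ^ k)*((k:ℂ))*(((1:ℂ) + (x 0:ℂ)^2 + (x 1:ℂ)^2)⁻¹) + (Zst x ^ k)*(((k:ℂ)))^2 + (1/2)*(Zst x ^ k)*(((k:ℂ)))^2*(((1:ℂ) + (x 0:ℂ)^2 + (x 1:ℂ)^2)⁻¹) + (1/4)*(Zst x ^ k)*(((k:ℂ)))^3 + 3*((x 1:ℂ))^2*(Zst x ^ k) + 6*((x 1:ℂ))^2*(Zst x ^ k)*(((1:ℂ) + (x 0:ℂ)^2 + (x 1:ℂ)^2)⁻¹) - 6*((x 1:ℂ))^2*(Zst x ^ k)*((((1:ℂ) + (x 0:ℂ)^2 + (x 1:ℂ)^2)⁻¹))^2 + (9/2)*((x 1:ℂ))^2*(Zst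 x ^ k)*((k:ℂ)) + 3*((x 1:ℂ))^2*(Zst x ^ k)*((k:ℂ))*(((1:ℂ) + (x 0:ℂ)^2 + (x 1:ℂ)^2)⁻¹) - 2*((x 1:ℂ))^2*(Zst x ^ k)*((k:ℂ))*((((1:ℂ) + (x 0:ℂ)^2 + (x 1:ℂ)^2)⁻¹))^2 + 2*((x 1:ℂ))^2*(Zst x ^ k)*(((k:ℂ)))^2 + ((x 1:ℂ))^2*(Zst x ^ k)*(((k:ℂ)))^2*(((1:ℂ) + (x 0:ℂ)^2 + (x 1:ℂ)^2)⁻¹) + (1/2)*((x 1:ℂ))^2*(Zst x ^ k)*(((k:ℂ)))^3 + (1/2)*((x 1:ℂ))^4*(Zst x ^ k) + ((x 1:ℂ))^4*(Zst x ^ k)*(((1:ℂ) + (x 0:ℂ)^2 + (x 1:ℂ)^2)⁻¹) - 12*((x 1:ℂ))^4*(Zst x ^ k)*((((1:ℂ) + (x 0:ℂ)^2 + (x 1:ℂ)^2)⁻¹))^2 + 4*((x 1:ℂ))^4*(Zst x ^ k)*((((1:ℂ) + (x 0:ℂ)^2 + (x 1:ℂ)^2)⁻¹))^3 + (5/4)*((x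 1:ℂ))^4*(Zst x ^ k)*((k:ℂ)) + (3/2)*((x 1:ℂ))^4*(Zst x ^ k)*((k:ℂ))*(((1:ℂ) + (x 0:ℂ)^2 + (x 1:ℂ)^2)⁻¹) - 4*((x 1:ℂ))^4*(Zst x ^ k)*((k:ℂ))*((((1:ℂ) + (x 0:ℂ)^2 + (x 1:ℂ)^2)⁻¹))^2 + ((x 1:ℂ))^4*(Zst x ^ k)*(((k:ℂ)))^2 + (1/2)*((x 1:ℂ))^4*(Zst x ^ k)*(((k:ℂ)))^2*(((1:ℂ) + (x 0:ℂ)^2 + (x 1:ℂ)^2)⁻¹) + (1/4)*((x 1:ℂ))^4*(Zst x ^ k)*(((k:ℂ)))^3 - 6*((x 1:ℂ))^6*(Zst x ^ k)*((((1:ℂ) + (x 0:ℂ)^2 + (x 1:ℂ)^2)⁻¹))^2 + 8*((x 1:ℂ))^6*(Zst x ^ k)*((((1:ℂ) + (x 0:ℂ)^2 + (x 1:ℂ)^2)⁻¹))^3 - 2*((x 1:ℂ))^6*(Zst x ^ k)*((k:ℂ))*((((1:ℂ) + (x 0:ℂ)^2 + (x 1:ℂ)^2)⁻¹))^2 + 4*((x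 1:ℂ))^8*(Zst x ^ k)*((((1:ℂ) + (x 0:ℂ)^2 + (x 1:ℂ)^2)⁻¹))^3 + ((x 0:ℂ))^2*(Zst x ^ k) + 2*((x 0:ℂ))^2*(Zst x ^ k)*(((1:ℂ) + (x 0:ℂ)^2 + (x 1:ℂ)^2)⁻¹) + (5/2)*((x 0:ℂ))^2*(Zst x ^ k)*((k:ℂ)) + 3*((x 0:ℂ))^2*(Zst x ^ k)*((k:ℂ))*(((1:ℂ) + (x 0:ℂ)^2 + (x 1:ℂ)^2)⁻¹) + 2*((x 0:ℂ))^2*(Zst x ^ k)*(((k:ℂ)))^2 + ((x 0:ℂ))^2*(Zst x ^ k)*(((k:ℂ)))^2*(((1:ℂ) + (x 0:ℂ)^2 + (x 1:ℂ)^2)⁻¹) + (1/2)*((x 0:ℂ))^2*(Zst x ^ k)*(((k:ℂ)))^3 + ((x 0:ℂ))^2*((x 1:ℂ))^2*(Zst x ^ k) + 2*((x 0:ℂ))^2*((x 1:ℂ))^2*(Zst x ^ k)*(((1:ℂ) + (x 0:ℂ)^2 + (x 1:ℂ)^2)⁻¹) - 12*((x 0:ℂ))^2*((x 1:ℂ))^2*(Zst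 x ^ k)*((((1:ℂ) + (x 0:ℂ)^2 + (x 1:ℂ)^2)⁻¹))^2 + 4*((x 0:ℂ))^2*((x 1:ℂ))^2*(Zst x ^ k)*((((1:ℂ) + (x 0:ℂ)^2 + (x 1:ℂ)^2)⁻¹))^3 + (5/2)*((x 0:ℂ))^2*((x 1:ℂ))^2*(Zst x ^ k)*((k:ℂ)) + 3*((x 0:ℂ))^2*((x 1:ℂ))^2*(Zst x ^ k)*((k:ℂ))*(((1:ℂ) + (x 0:ℂ)^2 + (x 1:ℂ)^2)⁻¹) - 4*((x 0:ℂ))^2*((x 1:ℂ))^2*(Zst x ^ k)*((k:ℂ))*((((1:ℂ) + (x 0:ℂ)^2 + (x 1:ℂ)^2)⁻¹))^2 + 2*((x 0:ℂ))^2*((x 1:ℂ))^2*(Zst x ^ k)*(((k:ℂ)))^2 + ((x 0:ℂ))^2*((x 1:ℂ))^2*(Zst x ^ k)*(((k:ℂ)))^2*(((1:ℂ) + (x 0:ℂ)^2 + (x 1:ℂ)^2)⁻¹) + (1/2)*((x 0:ℂ))^2*((x 1:ℂ))^2*(Zst x ^ k)*(((k:ℂ)))^3 - 12*((x 0:ℂ))^2*((x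 1:ℂ))^4*(Zst x ^ k)*((((1:ℂ) + (x 0:ℂ)^2 + (x 1:ℂ)^2)⁻¹))^2 + 16*((x 0:ℂ))^2*((x 1:ℂ))^4*(Zst x ^ k)*((((1:ℂ) + (x 0:ℂ)^2 + (x 1:ℂ)^2)⁻¹))^3 - 4*((x 0:ℂ))^2*((x 1:ℂ))^4*(Zst x ^ k)*((k:ℂ))*((((1:ℂ) + (x 0:ℂ)^2 + (x 1:ℂ)^2)⁻¹))^2 + 12*((x 0:ℂ))^2*((x 1:ℂ))^6*(Zst x ^ k)*((((1:ℂ) + (x 0:ℂ)^2 + (x 1:ℂ)^2)⁻¹))^3 + (1/2)*((x 0:ℂ))^4*(Zst x ^ k) + ((x 0:ℂ))^4*(Zst x ^ k)*(((1:ℂ) + (x 0:ℂ)^2 + (x 1:ℂ)^2)⁻¹) + (5/4)*((x 0:ℂ))^4*(Zst x ^ k)*((k:ℂ)) + (3/2)*((x 0:ℂ))^4*(Zst x ^ k)*((k:ℂ))*(((1:ℂ) + (x 0:ℂ)^2 + (x 1:ℂ)^2)⁻¹) + ((x 0:ℂ))^4*(Zst x ^ k)*(((k:ℂ)))^2 +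 (1/2)*((x 0:ℂ))^4*(Zst x ^ k)*(((k:ℂ)))^2*(((1:ℂ) + (x 0:ℂ)^2 + (x 1:ℂ)^2)⁻¹) + (1/4)*((x 0:ℂ))^4*(Zst x ^ k)*(((k:ℂ)))^3 - 6*((x 0:ℂ))^4*((x 1:ℂ))^2*(Zst x ^ k)*((((1:ℂ) + (x 0:ℂ)^2 + (x 1:ℂ)^2)⁻¹))^2 + 8*((x 0:ℂ))^4*((x 1:ℂ))^2*(Zst x ^ k)*((((1:ℂ) + (x 0:ℂ)^2 + (x 1:ℂ)^2)⁻¹))^3 - 2*((x 0:ℂ))^4*((x 1:ℂ))^2*(Zst x ^ k)*((k:ℂ))*((((1:ℂ) + (x 0:ℂ)^2 + (x 1:ℂ)^2)⁻¹))^2 + 12*((x 0:ℂ))^4*((x 1:ℂ))^4*(Zst x ^ k)*((((1:ℂ) + (x 0:ℂ)^2 + (x 1:ℂ)^2)⁻¹))^3 + 4*((x 0:ℂ))^6*((x 1:ℂ))^2*(Zst x ^ k)*((((1:ℂ) + (x 0:ℂ)^2 + (x 1:ℂ)^2)⁻¹))^3) * Complex.I_sq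
      + (2*(Zst x)*(Zst x ^ k) + 4*(Zst x)*(Zst x ^ k)*(((1:ℂ) + (x 0:ℂ)^2 + (x 1:ℂ)^2)⁻¹) - 2*(Zst x)*(Zst x ^ k)*((((1:ℂ) + (x 0:ℂ)^2 + (x 1:ℂ)^2)⁻¹))^2 + 2*(Zst x)*(Zst x ^ k)*((k:ℂ)) + 2*(x 1:ℂ)*Complex.I*(Zst x ^ k) + 4*(x 1:ℂ)*Complex.I*(Zst x ^ k)*(((1:ℂ) + (x 0:ℂ)^2 + (x 1:ℂ)^2)⁻¹) - 6*(x 1:ℂ)*Complex.I*(Zst x ^ k)*((((1:ℂ) + (x 0:ℂ)^2 + (x 1:ℂ)^2)⁻¹))^2 + 2*(x 1:ℂ)*Complex.I*(Zst x ^ k)*((k:ℂ)) - 2*(x 1:ℂ)*Complex.I*(Zst x ^ k)*((k:ℂ))*((((1:ℂ) + (x 0:ℂ)^2 + (x 1:ℂ)^2)⁻¹))^2 - 4*((x 1:ℂ))^2*(Zst x)*(Zst x ^ k)*((((1:ℂ) + (x 0:ℂ)^2 + (x 1:ℂ)^2)⁻¹))^2 + 4*((x 1:ℂ))^2*(Zst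 x)*(Zst x ^ k)*((((1:ℂ) + (x 0:ℂ)^2 + (x 1:ℂ)^2)⁻¹))^3 - 12*((x 1:ℂ))^3*Complex.I*(Zst x ^ k)*((((1:ℂ) + (x 0:ℂ)^2 + (x 1:ℂ)^2)⁻¹))^2 + 4*((x 1:ℂ))^3*Complex.I*(Zst x ^ k)*((((1:ℂ) + (x 0:ℂ)^2 + (x 1:ℂ)^2)⁻¹))^3 - 4*((x 1:ℂ))^3*Complex.I*(Zst x ^ k)*((k:ℂ))*((((1:ℂ) + (x 0:ℂ)^2 + (x 1:ℂ)^2)⁻¹))^2 - 2*((x 1:ℂ))^4*(Zst x)*(Zst x ^ k)*((((1:ℂ) + (x 0:ℂ)^2 + (x 1:ℂ)^2)⁻¹))^2 + 8*((x 1:ℂ))^4*(Zst x)*(Zst x ^ k)*((((1:ℂ) + (x 0:ℂ)^2 + (x 1:ℂ)^2)⁻¹))^3 - 6*((x 1:ℂ))^5*Complex.I*(Zst x ^ k)*((((1:ℂ) + (x 0:ℂ)^2 + (x 1:ℂ)^2)⁻¹))^2 + 8*((x 1:ℂ))^5*Complex.I*(Zst x ^ k)*((((1:ℂ) + (x 0:ℂ)^2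 + (x 1:ℂ)^2)⁻¹))^3 - 2*((x 1:ℂ))^5*Complex.I*(Zst x ^ k)*((k:ℂ))*((((1:ℂ) + (x 0:ℂ)^2 + (x 1:ℂ)^2)⁻¹))^2 + 4*((x 1:ℂ))^6*(Zst x)*(Zst x ^ k)*((((1:ℂ) + (x 0:ℂ)^2 + (x 1:ℂ)^2)⁻¹))^3 + 4*((x 1:ℂ))^7*Complex.I*(Zst x ^ k)*((((1:ℂ) + (x 0:ℂ)^2 + (x 1:ℂ)^2)⁻¹))^3 + 2*(x 0:ℂ)*(Zst x ^ k) + 4*(x 0:ℂ)*(Zst x ^ k)*(((1:ℂ) + (x 0:ℂ)^2 + (x 1:ℂ)^2)⁻¹) - 6*(x 0:ℂ)*(Zst x ^ k)*((((1:ℂ) + (x 0:ℂ)^2 + (x 1:ℂ)^2)⁻¹))^2 + 2*(x 0:ℂ)*(Zst x ^ k)*((k:ℂ)) - 2*(x 0:ℂ)*(Zst x ^ k)*((k:ℂ))*((((1:ℂ) + (x 0:ℂ)^2 + (x 1:ℂ)^2)⁻¹))^2 - 12*(x 0:ℂ)*((x 1:ℂ))^2*(Zst x ^ k)*((((1:ℂ)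 + (x 0:ℂ)^2 + (x 1:ℂ)^2)⁻¹))^2 + 4*(x 0:ℂ)*((x 1:ℂ))^2*(Zst x ^ k)*((((1:ℂ) + (x 0:ℂ)^2 + (x 1:ℂ)^2)⁻¹))^3 - 4*(x 0:ℂ)*((x 1:ℂ))^2*(Zst x ^ k)*((k:ℂ))*((((1:ℂ) + (x 0:ℂ)^2 + (x 1:ℂ)^2)⁻¹))^2 - 6*(x 0:ℂ)*((x 1:ℂ))^4*(Zst x ^ k)*((((1:ℂ) + (x 0:ℂ)^2 + (x 1:ℂ)^2)⁻¹))^2 + 8*(x 0:ℂ)*((x 1:ℂ))^4*(Zst x ^ k)*((((1:ℂ) + (x 0:ℂ)^2 + (x 1:ℂ)^2)⁻¹))^3 - 2*(x 0:ℂ)*((x 1:ℂ))^4*(Zst x ^ k)*((k:ℂ))*((((1:ℂ) + (x 0:ℂ)^2 + (x 1:ℂ)^2)⁻¹))^2 + 4*(x 0:ℂ)*((x 1:ℂ))^6*(Zst x ^ k)*((((1:ℂ) + (x 0:ℂ)^2 + (x 1:ℂ)^2)⁻¹))^3 - 4*((x 0:ℂ))^2*(Zst x)*(Zst x ^ k)*((((1:ℂ)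 + (x 0:ℂ)^2 + (x 1:ℂ)^2)⁻¹))^2 + 4*((x 0:ℂ))^2*(Zst x)*(Zst x ^ k)*((((1:ℂ) + (x 0:ℂ)^2 + (x 1:ℂ)^2)⁻¹))^3 - 12*((x 0:ℂ))^2*(x 1:ℂ)*Complex.I*(Zst x ^ k)*((((1:ℂ) + (x 0:ℂ)^2 + (x 1:ℂ)^2)⁻¹))^2 + 4*((x 0:ℂ))^2*(x 1:ℂ)*Complex.I*(Zst x ^ k)*((((1:ℂ) + (x 0:ℂ)^2 + (x 1:ℂ)^2)⁻¹))^3 - 4*((x 0:ℂ))^2*(x 1:ℂ)*Complex.I*(Zst x ^ k)*((k:ℂ))*((((1:ℂ) + (x 0:ℂ)^2 + (x 1:ℂ)^2)⁻¹))^2 - 4*((x 0:ℂ))^2*((x 1:ℂ))^2*(Zst x)*(Zst x ^ k)*((((1:ℂ) + (x 0:ℂ)^2 + (x 1:ℂ)^2)⁻¹))^2 + 16*((x 0:ℂ))^2*((x 1:ℂ))^2*(Zst x)*(Zst x ^ k)*((((1:ℂ) + (x 0:ℂ)^2 + (x 1:ℂ)^2)⁻¹))^3 - 12*((x 0:ℂ))^2*((x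 1:ℂ))^3*Complex.I*(Zst x ^ k)*((((1:ℂ) + (x 0:ℂ)^2 + (x 1:ℂ)^2)⁻¹))^2 + 16*((x 0:ℂ))^2*((x 1:ℂ))^3*Complex.I*(Zst x ^ k)*((((1:ℂ) + (x 0:ℂ)^2 + (x 1:ℂ)^2)⁻¹))^3 - 4*((x 0:ℂ))^2*((x 1:ℂ))^3*Complex.I*(Zst x ^ k)*((k:ℂ))*((((1:ℂ) + (x 0:ℂ)^2 + (x 1:ℂ)^2)⁻¹))^2 + 12*((x 0:ℂ))^2*((x 1:ℂ))^4*(Zst x)*(Zst x ^ k)*((((1:ℂ) + (x 0:ℂ)^2 + (x 1:ℂ)^2)⁻¹))^3 + 12*((x 0:ℂ))^2*((x 1:ℂ))^5*Complex.I*(Zst x ^ k)*((((1:ℂ) + (x 0:ℂ)^2 + (x 1:ℂ)^2)⁻¹))^3 - 12*((x 0:ℂ))^3*(Zst x ^ k)*((((1:ℂ) + (x 0:ℂ)^2 + (x 1:ℂ)^2)⁻¹))^2 + 4*((x 0:ℂ))^3*(Zst x ^ k)*((((1:ℂ) + (x 0:ℂ)^2 + (x 1:ℂ)^2)⁻¹))^3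 - 4*((x 0:ℂ))^3*(Zst x ^ k)*((k:ℂ))*((((1:ℂ) + (x 0:ℂ)^2 + (x 1:ℂ)^2)⁻¹))^2 - 12*((x 0:ℂ))^3*((x 1:ℂ))^2*(Zst x ^ k)*((((1:ℂ) + (x 0:ℂ)^2 + (x 1:ℂ)^2)⁻¹))^2 + 16*((x 0:ℂ))^3*((x 1:ℂ))^2*(Zst x ^ k)*((((1:ℂ) + (x 0:ℂ)^2 + (x 1:ℂ)^2)⁻¹))^3 - 4*((x 0:ℂ))^3*((x 1:ℂ))^2*(Zst x ^ k)*((k:ℂ))*((((1:ℂ) + (x 0:ℂ)^2 + (x 1:ℂ)^2)⁻¹))^2 + 12*((x 0:ℂ))^3*((x 1:ℂ))^4*(Zst x ^ k)*((((1:ℂ) + (x 0:ℂ)^2 + (x 1:ℂ)^2)⁻¹))^3 - 2*((x 0:ℂ))^4*(Zst x)*(Zst x ^ k)*((((1:ℂ) + (x 0:ℂ)^2 + (x 1:ℂ)^2)⁻¹))^2 + 8*((x 0:ℂ))^4*(Zst x)*(Zst x ^ k)*((((1:ℂ) + (x 0:ℂ)^2 + (x 1:ℂ)^2)⁻¹))^3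 - 6*((x 0:ℂ))^4*(x 1:ℂ)*Complex.I*(Zst x ^ k)*((((1:ℂ) + (x 0:ℂ)^2 + (x 1:ℂ)^2)⁻¹))^2 + 8*((x 0:ℂ))^4*(x 1:ℂ)*Complex.I*(Zst x ^ k)*((((1:ℂ) + (x 0:ℂ)^2 + (x 1:ℂ)^2)⁻¹))^3 - 2*((x 0:ℂ))^4*(x 1:ℂ)*Complex.I*(Zst x ^ k)*((k:ℂ))*((((1:ℂ) + (x 0:ℂ)^2 + (x 1:ℂ)^2)⁻¹))^2 + 12*((x 0:ℂ))^4*((x 1:ℂ))^2*(Zst x)*(Zst x ^ k)*((((1:ℂ) + (x 0:ℂ)^2 + (x 1:ℂ)^2)⁻¹))^3 + 12*((x 0:ℂ))^4*((x 1:ℂ))^3*Complex.I*(Zst x ^ k)*((((1:ℂ) + (x 0:ℂ)^2 + (x 1:ℂ)^2)⁻¹))^3 - 6*((x 0:ℂ))^5*(Zst x ^ k)*((((1:ℂ) + (x 0:ℂ)^2 + (x 1:ℂ)^2)⁻¹))^2 + 8*((x 0:ℂ))^5*(Zst x ^ k)*((((1:ℂ) + (x 0:ℂ)^2 + (x 1:ℂ)^2)⁻¹))^3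 - 2*((x 0:ℂ))^5*(Zst x ^ k)*((k:ℂ))*((((1:ℂ) + (x 0:ℂ)^2 + (x 1:ℂ)^2)⁻¹))^2 + 12*((x 0:ℂ))^5*((x 1:ℂ))^2*(Zst x ^ k)*((((1:ℂ) + (x 0:ℂ)^2 + (x 1:ℂ)^2)⁻¹))^3 + 4*((x 0:ℂ))^6*(Zst x)*(Zst x ^ k)*((((1:ℂ) + (x 0:ℂ)^2 + (x 1:ℂ)^2)⁻¹))^3 + 4*((x 0:ℂ))^6*(x 1:ℂ)*Complex.I*(Zst x ^ k)*((((1:ℂ) + (x 0:ℂ)^2 + (x 1:ℂ)^2)⁻¹))^3 + 4*((x 0:ℂ))^7*(Zst x ^ k)*((((1:ℂ) + (x 0:ℂ)^2 + (x 1:ℂ)^2)⁻¹))^3) * hz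

end aux2

/-- on `S² ∖ {(0,0,1)}`, for each integer `m ≥ 0` the extended
conformal Killing field `Y^A = Z^{m+1} Ẏ^A` has divergence
`∇_A Y^A = Z^m (m - x̃³)`, and `(Δ + 2)(∇_A Y^A) = 0`. -/
theorem extended_conformal_killing_divergence (m : ℕ) :
    (∀ x : Pt, divgC (fun y A => Zst y ^ (m + 1) * Ydot y A) x
        = Zst x ^ m * ((m : ℂ) - (X3 x : ℂ)))
    ∧ (∀ x : Pt,
        lapC (fun y => divgC (fun z A => Zst z ^ (m + 1) * Ydot z A) y) x
          + 2 * divgC (fun y A => Zst y ^ (m + 1) * Ydot y A) x = 0) := by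
  constructor
  · intro x
    rw [aux2.div_eq m x, aux2.Hf_eq]
  · intro x
    have hfun : (fun y => divgC (fun z A => Zst z ^ (m + 1) * Ydot z A) y) = aux2.Hf m := by
      funext y; exact aux2.div_eq m y
    rw [hfun, aux2.div_eq m x]
    exact aux2.lap_plus m x
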